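/- arXiv:2502.07168 — 3 statements merged into one kernel-verified Lean document; each statement's English description precedes it below -/
import Mathlib

section
/- Suppose K = 1. The constant mechanism defined by Q*(F,θ) = q* and T*(F,θ) = λ·u(q*) for all F ∈ 𝓕 and all θ ∈ [0,1], where q* = (u')⁻¹(c/λ), is incentive compatible, individually rational, and robustly optimal: its profit guarantee Π(Q*,T*) is at least Π(Q,T) for every incentive compatible and individually rational mechanism (Q,T). -/
open MeasureTheory Set Filter Topology

noncomputable section

/-- The type space for a single good: `Θ = [0,1]`. -/
abbrev Theta1 := Set.Icc (0:ℝ) 1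

/-- The set `𝓕` of Borel probability measures on `Θ = [0,1]` with mean `lam`. -/
def Fcal1 (lam : ℝ) : Set (Measure Theta1) :=
  {F | IsProbabilityMeasure F ∧ ∫ θ, (θ : ℝ) ∂F = lam}

/-- Incentive compatibility for a single-good mechanism. -/
def IC1 (lam : ℝ) (u : ℝ → ℝ) (Q : Measure Theta1 → Theta1 → ℝ)
    (T : Measure Theta1 → Theta1 → ℝ) : Prop :=
  (∀ F ∈ Fcal1 lam, ∀ θ θ' : Theta1,
      (θ : ℝ) * u (Q F θ') - T F θ' ≤ (θ : ℝ) * u (Q F θ) - T F θ) ∧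
  (∀ F ∈ Fcal1 lam, ∀ F' ∈ Fcal1 lam,
      ∫ θ, ((θ : ℝ) * u (Q F' θ) - T F' θ) ∂F ≤
        ∫ θ, ((θ : ℝ) * u (Q F θ) - T F θ) ∂F)

/-- Individual rationality for a single-good mechanism. -/
def IR1 (lam : ℝ) (u : ℝ → ℝ) (Q : Measure Theta1 → Theta1 → ℝ)
    (T : Measure Theta1 → Theta1 → ℝ) : Prop :=
  ∀ F ∈ Fcal1 lam, 0 ≤ ∫ θ, ((θ : ℝ) * u (Q F θ) - T F θ) ∂F

/-- The profit guarantee `Π(Q,T) = inf_{F ∈ 𝓕} E_F[T(F,θ) - c·Q(F,θ)]` (valued in `EReal`). -/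
def guarantee1 (lam c : ℝ) (Q : Measure Theta1 → Theta1 → ℝ)
    (T : Measure Theta1 → Theta1 → ℝ) : EReal :=
  ⨅ F ∈ Fcal1 lam, ((∫ θ, (T F θ - c * Q F θ) ∂F : ℝ) : EReal)

/-!
Nature may always choose the point mass at the mean `λ`. Against it, individual rationality caps
the payment of any mechanism at `λ u(q)`, so its guarantee is at most `max_{q ≥ 0} λ u(q) - c q`.
By concavity this maximum is attained at `q*`, where `λ u'(q*) = c`, and the constant mechanism
`(q*, λ u(q*))` earns exactly this amount against every `F ∈ 𝓕`, while leaving the buyer zero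
expected surplus because `E_F[θ] = λ`.
-/

lemma ConcaveOn.le_add_mul_sub_of_hasDerivAt {S : Set ℝ} {f : ℝ → ℝ} {f' x y : ℝ}
    (hf : ConcaveOn ℝ S f) (hx : x ∈ S) (hy : y ∈ S) (hf' : HasDerivAt f f' x) :
    f y ≤ f x + f' * (y - x) := by
  rcases lt_trichotomy y x with hyx | rfl | hxy
  · have h := hf.le_slope_of_hasDerivAt hy hx hyx hf'
    rw [slope_def_field, le_div_iff₀ (sub_pos.2 hyx)] at h
    linarith
  · simp
  · have h := hf.slope_le_of_hasDerivAt hx hy hxy hf'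
    rw [slope_def_field, div_le_iff₀ (sub_pos.2 hxy)] at h
    linarith

lemma ConcaveOn.mul_sub_mul_le_of_hasDerivAt {S : Set ℝ} {f : ℝ → ℝ} {f' a c x y : ℝ}
    (hf : ConcaveOn ℝ S f) (hx : x ∈ S) (hy : y ∈ S) (hf' : HasDerivAt f f' x)
    (ha : 0 ≤ a) (hc : a * f' = c) :
    a * f y - c * y ≤ a * f x - c * x := by
  have := mul_le_mul_of_nonneg_left (hf.le_add_mul_sub_of_hasDerivAt hx hy hf') ha
  rw [← hc]
  linarith

lemma integrable_coe_Theta1 (F : Measure Theta1) [IsFiniteMeasure F] :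
    Integrable (fun θ : Theta1 => (θ : ℝ)) F :=
  .of_bound continuous_subtype_val.aestronglyMeasurable 1
    (.of_forall fun θ => by simpa [abs_le] using ⟨by linarith [θ.2.1], θ.2.2⟩)

lemma integral_coe_mul_sub_mul {lam : ℝ} {F : Measure Theta1} (hF : F ∈ Fcal1 lam) (a : ℝ) :
    ∫ θ, ((θ : ℝ) * a - lam * a) ∂F = 0 := by
  have := hF.1
  rw [integral_sub ((integrable_coe_Theta1 F).mul_const a) (integrable_const _),
    integral_mul_const, hF.2]
  simp

lemma dirac_mem_Fcal1 {lam : ℝ} (hlam : lam ∈ Theta1) :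
    Measure.dirac (⟨lam, hlam⟩ : Theta1) ∈ Fcal1 lam :=
  ⟨inferInstance, integral_dirac _ _⟩

lemma IC1_const (lam : ℝ) (u : ℝ → ℝ) (q t : ℝ) :
    IC1 lam u (fun _ _ => q) (fun _ _ => t) :=
  ⟨fun _ _ _ _ => le_rfl, fun _ _ _ _ => le_rfl⟩

lemma IR1_const (lam : ℝ) (u : ℝ → ℝ) (q : ℝ) :
    IR1 lam u (fun _ _ => q) (fun _ _ => lam * u q) := fun _ hF =>
  (integral_coe_mul_sub_mul hF (u q)).ge

lemma le_guarantee1_const (lam c q t : ℝ) :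
    ((t - c * q : ℝ) : EReal) ≤ guarantee1 lam c (fun _ _ => q) (fun _ _ => t) :=
  le_iInf₂ fun F hF => by
    have := hF.1
    simp

lemma exists_guarantee1_le_of_IR1 {lam c : ℝ} (hlam : lam ∈ Theta1) {u : ℝ → ℝ}
    {Q T : Measure Theta1 → Theta1 → ℝ} (hQ : ∀ F θ, 0 ≤ Q F θ) (hIR : IR1 lam u Q T) :
    ∃ q, 0 ≤ q ∧ guarantee1 lam c Q T ≤ ((lam * u q - c * q : ℝ) : EReal) := by
  set δ := Measure.dirac (⟨lam, hlam⟩ : Theta1)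
  have hδ : δ ∈ Fcal1 lam := dirac_mem_Fcal1 hlam
  have hT : T δ ⟨lam, hlam⟩ ≤ lam * u (Q δ ⟨lam, hlam⟩) := by
    have := hIR δ hδ
    rw [integral_dirac] at this
    linarith
  refine ⟨Q δ ⟨lam, hlam⟩, hQ _ _, (iInf₂_le δ hδ).trans ?_⟩
  rw [integral_dirac]
  exact EReal.coe_le_coe_iff.2 (by linarith)

theorem stmt0_general
    (c lam : ℝ) (hlam : 0 < lam ∧ lam < 1)
    (u u' : ℝ → ℝ)
    (hu_conc : StrictConcaveOn ℝ (Set.Ici 0) u)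
    (hu_deriv : ∀ q, 0 < q → HasDerivAt u (u' q) q)
    (qstar : ℝ) (hqs_pos : 0 < qstar) (hqs : lam * u' qstar = c)
    (Qs Ts : Measure Theta1 → Theta1 → ℝ)
    (hQs : ∀ F θ, Qs F θ = qstar) (hTs : ∀ F θ, Ts F θ = lam * u qstar) :
    IC1 lam u Qs Ts ∧ IR1 lam u Qs Ts ∧
      ∀ Q T : Measure Theta1 → Theta1 → ℝ,
        (∀ F θ, 0 ≤ Q F θ) → IC1 lam u Q T → IR1 lam u Q T →
          guarantee1 lam c Q T ≤ guarantee1 lam c Qs Ts := by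
  obtain rfl : Qs = fun _ _ => qstar := funext₂ hQs
  obtain rfl : Ts = fun _ _ => lam * u qstar := funext₂ hTs
  refine ⟨IC1_const .., IR1_const lam u qstar, fun Q T hQ _ hIR => ?_⟩
  obtain ⟨q, hq, hQT⟩ := exists_guarantee1_le_of_IR1 ⟨hlam.1.le, hlam.2.le⟩ (c := c) hQ hIR
  have hq_le : lam * u q - c * q ≤ lam * u qstar - c * qstar :=
    hu_conc.concaveOn.mul_sub_mul_le_of_hasDerivAt (le_of_lt hqs_pos) hq
      (hu_deriv qstar hqs_pos) hlam.1.le hqs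
  calc guarantee1 lam c Q T ≤ ((lam * u q - c * q : ℝ) : EReal) := hQT
    _ ≤ ((lam * u qstar - c * qstar : ℝ) : EReal) := EReal.coe_le_coe_iff.2 hq_le
    _ ≤ _ := le_guarantee1_const ..

/-- For `K = 1`, the constant mechanism `Q*(F,θ) = q*`,
`T*(F,θ) = λ·u(q*)`, where `q* = (u')⁻¹(c/λ)` (i.e. `λ·u'(q*) = c`), is IC, IR and
robustly optimal among all IC and IR mechanisms. -/
theorem stmt0
    (c lam : ℝ) (hc : 0 < c) (hlam : 0 < lam ∧ lam < 1)
    (u u' : ℝ → ℝ)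
    (hu_mono : StrictMonoOn u (Set.Ici 0))
    (hu_conc : StrictConcaveOn ℝ (Set.Ici 0) u)
    (hu_nonneg : ∀ q, 0 ≤ q → 0 ≤ u q)
    (hu_deriv : ∀ q, 0 < q → HasDerivAt u (u' q) q)
    (hu'_zero : Tendsto u' (nhdsWithin 0 (Set.Ioi 0)) atTop)
    (hu'_top : Tendsto u' atTop (nhds 0))
    (qstar : ℝ) (hqs_pos : 0 < qstar) (hqs : lam * u' qstar = c)
    (Qs Ts : Measure Theta1 → Theta1 → ℝ)
    (hQs : ∀ F θ, Qs F θ = qstar) (hTs : ∀ F θ, Ts F θ = lam * u qstar) :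
    IC1 lam u Qs Ts ∧ IR1 lam u Qs Ts ∧
      ∀ Q T : Measure Theta1 → Theta1 → ℝ,
        (∀ F θ, 0 ≤ Q F θ) → IC1 lam u Q T → IR1 lam u Q T →
          guarantee1 lam c Q T ≤ guarantee1 lam c Qs Ts :=
  stmt0_general c lam hlam u u' hu_conc hu_deriv qstar hqs_pos hqs Qs Ts hQs hTs

end
end

section
/- For every incentive compatible and individually rational mechanism (Q,T), the profit guarantee is bounded above by the full-surplus benchmark at the optimal symmetric quantity: inf_{F ∈ 𝓕} E_F[T(F,θ) − c·∑_{i=1}^K Q_i(F,θ)] ≤ λ·u(q*) − cK·q*, where q* = (u')⁻¹(cK/λ). -/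
/-!
Nature may choose the point mass at the symmetric type `(λ/K, …, λ/K)`, which lies in `𝓕`.
There individual rationality caps the transfer by the buyer's value `∑ᵢ (λ/K) u(qᵢ)`, so the
profit is at most `∑ᵢ ((λ/K) u(qᵢ) − c qᵢ)`. Each summand is a concave function of `qᵢ` whose
first-order condition `(λ/K) u'(q) = c` holds at `q*`, hence is at most `(λ/K) u(q*) − c q*`.
-/

open MeasureTheory Set Filter Topology

noncomputable section

/-- The type space `Θ = [0,1]^K`. -/
abbrev Theta (K : ℕ) := Fin K → Set.Icc (0:ℝ) 1

/-- The set `𝓕` of Borel probability measures on `Θ` whose mean total demand is `lam`. -/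
def Fcal (K : ℕ) (lam : ℝ) : Set (Measure (Theta K)) :=
  {F | IsProbabilityMeasure F ∧ ∫ θ, (∑ i, (θ i : ℝ)) ∂F = lam}

/-- The buyer's utility from allocation `q` and transfer `t` at type `θ`. -/
def util (K : ℕ) (u : ℝ → ℝ) (θ : Theta K) (q : Fin K → ℝ) (t : ℝ) : ℝ :=
  ∑ i, (θ i : ℝ) * u (q i) - t

/-- Incentive compatibility of a mechanism `(Q,T)`. -/
def IC (K : ℕ) (lam : ℝ) (u : ℝ → ℝ) (Q : Measure (Theta K) → Theta K → Fin K → ℝ)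
    (T : Measure (Theta K) → Theta K → ℝ) : Prop :=
  (∀ F ∈ Fcal K lam, ∀ θ θ' : Theta K,
      util K u θ (Q F θ') (T F θ') ≤ util K u θ (Q F θ) (T F θ)) ∧
  (∀ F ∈ Fcal K lam, ∀ F' ∈ Fcal K lam,
      ∫ θ, util K u θ (Q F' θ) (T F' θ) ∂F ≤ ∫ θ, util K u θ (Q F θ) (T F θ) ∂F)

/-- Individual rationality of a mechanism `(Q,T)`. -/
def IR (K : ℕ) (lam : ℝ) (u : ℝ → ℝ) (Q : Measure (Theta K) → Theta K → Fin K → ℝ)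
    (T : Measure (Theta K) → Theta K → ℝ) : Prop :=
  ∀ F ∈ Fcal K lam, 0 ≤ ∫ θ, util K u θ (Q F θ) (T F θ) ∂F

/-- The profit guarantee `inf_{F ∈ 𝓕} E_F[T(F,θ) - c·∑ᵢ Qᵢ(F,θ)]` (valued in `EReal`). -/
def guarantee (K : ℕ) (lam c : ℝ) (Q : Measure (Theta K) → Theta K → Fin K → ℝ)
    (T : Measure (Theta K) → Theta K → ℝ) : EReal :=
  ⨅ F ∈ Fcal K lam, ((∫ θ, (T F θ - c * ∑ i, Q F θ i) ∂F : ℝ) : EReal)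

lemma ConcaveOn.isMaxOn_of_hasDerivAt_eq_zero {S : Set ℝ} {f : ℝ → ℝ} {x : ℝ}
    (hf : ConcaveOn ℝ S f) (hx : x ∈ interior S) (hd : HasDerivAt f 0 x) : IsMaxOn f S x := by
  have hmin := hf.neg.isMinOn_of_rightDeriv_eq_zero hx
    ((hd.neg.hasDerivWithinAt.derivWithin (uniqueDiffWithinAt_Ioi x)).trans neg_zero)
  simpa using hmin.neg

lemma dirac_const_mem_Fcal {K : ℕ} {lam : ℝ} (t : Icc (0 : ℝ) 1) (ht : K * (t : ℝ) = lam) :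
    Measure.dirac (fun _ => t) ∈ Fcal K lam :=
  ⟨inferInstance, by simpa [integral_dirac] using ht⟩

lemma ConcaveOn.isMaxOn_const_mul_sub_mul {S : Set ℝ} {u : ℝ → ℝ} (hu : ConcaveOn ℝ S u)
    {t c a d : ℝ} (ht : 0 ≤ t) (ha : a ∈ interior S) (hd : HasDerivAt u d a) (hopt : t * d = c) :
    IsMaxOn (fun q => t * u q - c * q) S a := by
  have hconc : ConcaveOn ℝ S fun q => t * u q - c * q :=
    (hu.smul ht).sub ((LinearMap.mul ℝ ℝ c).convexOn hu.1)
  refine hconc.isMaxOn_of_hasDerivAt_eq_zero ha ?_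
  have hd' := (hd.const_mul t).sub ((hasDerivAt_id' a).const_mul c)
  rwa [hopt, mul_one, sub_self] at hd'

theorem stmt9_general
    (K : ℕ) (c lam : ℝ) (hlam : 0 < lam ∧ lam < K)
    (u u' : ℝ → ℝ)
    (hu_conc : StrictConcaveOn ℝ (Set.Ici 0) u)
    (hu_deriv : ∀ x, 0 < x → HasDerivAt u (u' x) x)
    (qstar : ℝ) (hqs_pos : 0 < qstar) (hqs : lam * u' qstar = c * K)
    (Q : Measure (Theta K) → Theta K → Fin K → ℝ) (T : Measure (Theta K) → Theta K → ℝ)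
    (hQpos : ∀ F θ i, 0 ≤ Q F θ i)
    (hIR : IR K lam u Q T) :
    guarantee K lam c Q T ≤ ((lam * u qstar - c * K * qstar : ℝ) : EReal) := by
  obtain ⟨hlam0, hlamK⟩ := hlam
  have hK : (0 : ℝ) < K := hlam0.trans hlamK
  set t : Icc (0 : ℝ) 1 := ⟨lam / K, by positivity, (div_le_one hK).2 hlamK.le⟩
  set θ : Theta K := fun _ => t
  have hF : Measure.dirac θ ∈ Fcal K lam := dirac_const_mem_Fcal t (mul_div_cancel₀ lam hK.ne')
  have hmax : IsMaxOn (fun q => (t : ℝ) * u q - c * q) (Ici 0) qstar :=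
    hu_conc.concaveOn.isMaxOn_const_mul_sub_mul t.2.1 (by simpa using hqs_pos) (hu_deriv qstar hqs_pos)
      (by simp [t]; field_simp; linarith)
  have hIRθ := hIR _ hF
  refine (iInf₂_le _ hF).trans (EReal.coe_le_coe_iff.2 ?_)
  simp only [integral_dirac, util] at hIRθ ⊢
  calc T _ θ - c * ∑ i, Q _ θ i
      ≤ ∑ i, ((θ i : ℝ) * u (Q (Measure.dirac θ) θ i) - c * Q _ θ i) := by
        rw [Finset.sum_sub_distrib, Finset.mul_sum]; linarith
    _ ≤ ∑ _i : Fin K, ((t : ℝ) * u qstar - c * qstar) :=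
        Finset.sum_le_sum fun i _ => hmax (hQpos _ θ i)
    _ = lam * u qstar - c * K * qstar := by simp [t]; field_simp

/-- Every IC and IR mechanism has profit guarantee at most the
full-surplus benchmark `λ·u(q*) − cK·q*` at the optimal symmetric quantity
`q* = (u')⁻¹(cK/λ)` (i.e. `λ·u'(q*) = cK`). -/
theorem stmt9
    (K : ℕ) (hK : 1 ≤ K) (c lam : ℝ) (hc : 0 < c) (hlam : 0 < lam ∧ lam < K)
    (u u' : ℝ → ℝ)
    (hu_mono : StrictMonoOn u (Set.Ici 0))
    (hu_conc : StrictConcaveOn ℝ (Set.Ici 0) u)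
    (hu_nonneg : ∀ x, 0 ≤ x → 0 ≤ u x)
    (hu_deriv : ∀ x, 0 < x → HasDerivAt u (u' x) x)
    (hu'_zero : Tendsto u' (nhdsWithin 0 (Set.Ioi 0)) atTop)
    (hu'_top : Tendsto u' atTop (nhds 0))
    (qstar : ℝ) (hqs_pos : 0 < qstar) (hqs : lam * u' qstar = c * K)
    (Q : Measure (Theta K) → Theta K → Fin K → ℝ) (T : Measure (Theta K) → Theta K → ℝ)
    (hQpos : ∀ F θ i, 0 ≤ Q F θ i)
    (hIC : IC K lam u Q T) (hIR : IR K lam u Q T) :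
    guarantee K lam c Q T ≤ ((lam * u qstar - c * K * qstar : ℝ) : EReal) :=
  stmt9_general K c lam hlam u u' hu_conc hu_deriv qstar hqs_pos hqs Q T hQpos hIR

end
end

section
/- Under the committed spend mechanism with price equal to marginal cost (p = c) and committed quantity q̄ ≥ 0, whenever the buyer's chosen total consumption strictly exceeds the commitment—i.e., the maximizer q^b of ∑_{i=1}^K θ_i·u(q_i) − t̄ − c·(∑_{i=1}^K q_i − q̄) subject to ∑_{i=1}^K q_i ≥ q̄ satisfies ∑_{i=1}^K q^b_i > q̄—the allocation q^b is socially efficient: it maximizes ∑_{i=1}^K θ_i·u(q_i) − c·∑_{i=1}^K q_i over all q ∈ ℝ₊^K (without the constraint ∑_i q_i ≥ q̄). -/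
/-! At price `p = c` the buyer's objective differs from social welfare `∑ θᵢ u(qᵢ) − c ∑ qᵢ` by
a constant, so `qb` maximizes welfare on the feasible set. The commitment constraint is slack
at `qb`, so `qb` is a local maximum of welfare on the whole orthant; welfare is concave there,
and a local maximum of a concave function is a global one. -/

open Set Filter Topology

noncomputable section

/-- The feasible set of the committed spend problem: nonnegative quantity vectors whose
total is at least the committed quantity `qbar`. -/
def feasible (K : ℕ) (qbar : ℝ) : Set (Fin K → ℝ) :=
  {q | (∀ i, 0 ≤ q i) ∧ qbar ≤ ∑ i, q i}

/-- The buyer's objective in the committed spend mechanism: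
`∑ᵢ θᵢ·u(qᵢ) − t̄ − p·(∑ᵢ qᵢ − q̄)`. -/
def csObj (K : ℕ) (u : ℝ → ℝ) (θ : Theta K) (qbar tbar p : ℝ) (q : Fin K → ℝ) : ℝ :=
  ∑ i, (θ i : ℝ) * u (q i) - tbar - p * (∑ i, q i - qbar)

theorem ConcaveOn.sum_comp_eval {ι 𝕜 : Type*} [Fintype ι] [Field 𝕜] [LinearOrder 𝕜]
    [IsStrictOrderedRing 𝕜] {s : Set 𝕜} {f : ι → 𝕜 → 𝕜} (hf : ∀ i, ConcaveOn 𝕜 s (f i)) :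
    ConcaveOn 𝕜 (univ.pi fun _ => s) fun x => ∑ i, f i (x i) := by
  refine ⟨convex_pi fun i _ => (hf i).1, fun x hx y hy a b ha hb hab => ?_⟩
  simp only [smul_eq_mul, Finset.mul_sum, ← Finset.sum_add_distrib, Pi.add_apply, Pi.smul_apply]
  exact Finset.sum_le_sum fun i _ => (hf i).2 (hx i trivial) (hy i trivial) ha hb hab

theorem concaveOn_weighted_sum_sub_linear {ι : Type*} [Fintype ι] {s : Set ℝ} {u : ℝ → ℝ}
    (hu : ConcaveOn ℝ s u) {θ : ι → ℝ} (hθ : ∀ i, 0 ≤ θ i) (c : ℝ) :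
    ConcaveOn ℝ (univ.pi fun _ => s) fun q => ∑ i, θ i * u (q i) - c * ∑ i, q i := by
  have hlin : ConvexOn ℝ (univ.pi fun _ => s) fun q : ι → ℝ => c * ∑ i, q i :=
    ⟨convex_pi fun _ _ => hu.1, fun x _ y _ a b _ _ _ => le_of_eq <| by
      simp only [Pi.add_apply, Pi.smul_apply, smul_eq_mul, Finset.sum_add_distrib, ← Finset.mul_sum]
      ring⟩
  exact (ConcaveOn.sum_comp_eval fun i => hu.smul (hθ i)).sub hlin

theorem IsMaxOn.of_inter_mem_nhds_of_concaveOn {E β : Type*} [AddCommGroup E]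
    [TopologicalSpace E] [Module ℝ E] [IsTopologicalAddGroup E] [ContinuousSMul ℝ E]
    [AddCommGroup β] [PartialOrder β] [IsOrderedAddMonoid β] [Module ℝ β]
    [IsOrderedModule ℝ β] {f : E → β} {s t : Set E} {a : E}
    (h : IsMaxOn f (s ∩ t) a) (ha : a ∈ s) (ht : t ∈ 𝓝 a) (hf : ConcaveOn ℝ s f) :
    IsMaxOn f s a :=
  IsMaxOn.of_isLocalMaxOn_of_concaveOn ha
    (h.filter_mono (le_principal_iff.2 (inter_mem_nhdsWithin s ht))) hf

theorem stmt14_general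
    (K : ℕ) (c : ℝ)
    (u : ℝ → ℝ)
    (hu_conc : StrictConcaveOn ℝ (Set.Ici 0) u)
    (θ : Theta K) (qbar tbar : ℝ)
    (qb : Fin K → ℝ) (hqb_feas : qb ∈ feasible K qbar)
    (hqb_max : ∀ q ∈ feasible K qbar, csObj K u θ qbar tbar c q ≤ csObj K u θ qbar tbar c qb)
    (hexcess : qbar < ∑ i, qb i) :
    ∀ q : Fin K → ℝ, (∀ i, 0 ≤ q i) →
      ∑ i, (θ i : ℝ) * u (q i) - c * ∑ i, q i ≤
        ∑ i, (θ i : ℝ) * u (qb i) - c * ∑ i, qb i := by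
  intro q hq
  have hslack : {q : Fin K → ℝ | qbar < ∑ i, q i} ∈ 𝓝 qb :=
    (isOpen_lt continuous_const (continuous_finsetSum _ fun i _ => continuous_apply i)).mem_nhds
      hexcess
  have hmax_slack : IsMaxOn (fun q : Fin K → ℝ => ∑ i, (θ i : ℝ) * u (q i) - c * ∑ i, q i)
      ((univ.pi fun _ => Ici 0) ∩ {q | qbar < ∑ i, q i}) qb := by
    rw [isMaxOn_iff]
    rintro q' ⟨hq'_nonneg, hq'_slack⟩
    have h := hqb_max q' ⟨fun i => hq'_nonneg i trivial, le_of_lt hq'_slack⟩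
    simp only [csObj] at h
    linarith
  exact hmax_slack.of_inter_mem_nhds_of_concaveOn (fun i _ => hqb_feas.1 i) hslack
    (concaveOn_weighted_sum_sub_linear hu_conc.concaveOn (fun i => (θ i).2.1) c) fun i _ => hq i

/-- In a committed spend mechanism with price `p = c` equal to
marginal cost, whenever the buyer's chosen total consumption strictly exceeds the
commitment `q̄`, the chosen allocation is socially efficient: it maximizes
`∑ᵢ θᵢ·u(qᵢ) − c·∑ᵢ qᵢ` over all nonnegative `q`, without the constraint. -/
theorem stmt14
    (K : ℕ) (hK : 1 ≤ K) (c : ℝ) (hc : 0 < c)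
    (u u' : ℝ → ℝ)
    (hu_mono : StrictMonoOn u (Set.Ici 0))
    (hu_conc : StrictConcaveOn ℝ (Set.Ici 0) u)
    (hu_nonneg : ∀ x, 0 ≤ x → 0 ≤ u x)
    (hu_deriv : ∀ x, 0 < x → HasDerivAt u (u' x) x)
    (hu'_zero : Tendsto u' (nhdsWithin 0 (Set.Ioi 0)) atTop)
    (hu'_top : Tendsto u' atTop (nhds 0))
    (θ : Theta K) (qbar tbar : ℝ) (hqbar : 0 ≤ qbar) (htbar : 0 ≤ tbar)
    (qb : Fin K → ℝ) (hqb_feas : qb ∈ feasible K qbar)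
    (hqb_max : ∀ q ∈ feasible K qbar, csObj K u θ qbar tbar c q ≤ csObj K u θ qbar tbar c qb)
    (hexcess : qbar < ∑ i, qb i) :
    ∀ q : Fin K → ℝ, (∀ i, 0 ≤ q i) →
      ∑ i, (θ i : ℝ) * u (q i) - c * ∑ i, q i ≤
        ∑ i, (θ i : ℝ) * u (qb i) - c * ∑ i, qb i :=
  stmt14_general K c u hu_conc θ qbar tbar qb hqb_feas hqb_max hexcess

end
end
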